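/- Every group extension 1 → N → G → Q → 1 determines a five-term exact sequence M(G) → M(Q) → N/[N,G] → G/G' → Q/Q' → 1 of abelian-group homomorphisms. -/

import Mathlib

/-!
Write `G = F/R` and `Q = E/T` for the two free presentations, and use freeness to lift `π` to
`φ : F → E` and to choose `θ : E → F` with `π ∘ p ∘ θ = q`. All maps are induced on the quotients
`F/[R,F]`, `E/[T,E]`, `G/[N,G]`, in which `R/[R,F]`, `T/[T,E]`, `N/[N,G]` are central. Hence two
homomorphisms that agree modulo `R`, `T` or `N` agree modulo the corresponding commutator subgroup
on all commutators; applied to `p ∘ θ ∘ φ` versus `p` and to `φ ∘ θ` versus the identity, this is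
what makes the compositions of the maps behave. Exactness then comes from lifting elements of
`[N, G] = p([S, F])`, with `S = p⁻¹(N)`, and of `[G, G] = p([F, F])` back to `F`.
-/

open Subgroup

/-- Witt formula: number of basic commutators of weight `n` on `d` letters. -/
def wittChi (n d : ℕ) : ℕ :=
  ((∑ m ∈ n.divisors, ArithmeticFunction.moebius m * (d : ℤ) ^ (n / m)) / n).toNat

/-- `iterCommutator R c = [R, F, …, F]` with `c` copies of `F`. -/
def iterCommutator {F : Type*} [Group F] (R : Subgroup F) : ℕ → Subgroup F
  | 0 => R
  | c + 1 => ⁅iterCommutator R c, (⊤ : Subgroup F)⁆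

instance iterCommutator_normal {F : Type*} [Group F] (R : Subgroup F) [h : R.Normal]
    (c : ℕ) : (iterCommutator R c).Normal := by
  induction c with
  | zero => exact h
  | succ n ih => exact Subgroup.commutator_normal _ _

/-- A free presentation `1 → R → F → G → 1` of a group `G`. -/
structure FreePresentation (G : Type) [Group G] where
  ι : Type
  π : FreeGroup ι →* G
  surj : Function.Surjective π

/-- The `c`-nilpotent multiplier `M^(c)(G) = (R ∩ γ_{c+1}(F)) / [R, _c F]`
(the Schur multiplier when `c = 1`), realized as a subgroup of `F / [R, _c F]`. -/
def nilMult {G : Type} [Group G] (P : FreePresentation G) (c : ℕ) :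
    Subgroup (FreeGroup P.ι ⧸ iterCommutator P.π.ker c) :=
  Subgroup.map (QuotientGroup.mk' (iterCommutator P.π.ker c))
    (P.π.ker ⊓ (⊤ : Subgroup (FreeGroup P.ι)).lowerCentralSeries c)

open scoped commutatorElement

section Commutators

variable {G H K : Type*} [Group G] [Group H] [Group K]

theorem commutatorElement_mul_of_mem_center {z w : G} (hz : z ∈ center G) (hw : w ∈ center G)
    (x y : G) : ⁅z * x, w * y⁆ = ⁅x, y⁆ := by
  rw [mem_center_iff] at hz hw
  rw [commutatorElement_mul_left_eq_conj_mul, ← hz, mul_inv_cancel_right,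
    commutatorElement_eq_one_iff_mul_comm.mpr (hz _).symm, mul_one,
    commutatorElement_mul_right_eq_mul_conj, commutatorElement_eq_one_iff_mul_comm.mpr (hw x),
    one_mul, ← hw, mul_inv_cancel_right]

theorem commutator_le_eqLocus_of_mul_inv_mem_center (a b : H →* K)
    (h : ∀ x, a x * (b x)⁻¹ ∈ center K) : commutator H ≤ a.eqLocus b := by
  rw [commutator_def, commutator_le]
  intro x _ y _
  have hab : ∀ x, a x = (a x * (b x)⁻¹) * b x := fun x => (inv_mul_cancel_right _ _).symm
  change a ⁅x, y⁆ = b ⁅x, y⁆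
  rw [map_commutatorElement, map_commutatorElement, hab x, hab y,
    commutatorElement_mul_of_mem_center (h x) (h y)]

theorem map_mk'_le_center (N : Subgroup K) [N.Normal] :
    N.map (QuotientGroup.mk' ⁅N, ⊤⁆) ≤ center (K ⧸ ⁅N, ⊤⁆) := by
  rw [← commutator_top_right_eq_bot_iff_le_center,
    ← map_top_of_surjective _ (QuotientGroup.mk'_surjective _), ← map_commutator,
    Subgroup.map_eq_bot_iff, QuotientGroup.ker_mk']

-- Modulo `[N, K]` the two maps differ by a central factor.
theorem coe_apply_eq_of_mem_commutator {N : Subgroup K} [N.Normal] {a b : H →* K}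
    (h : ∀ x, a x * (b x)⁻¹ ∈ N) {x : H} (hx : x ∈ commutator H) :
    (a x : K ⧸ ⁅N, (⊤ : Subgroup K)⁆) = (b x : K ⧸ ⁅N, (⊤ : Subgroup K)⁆) := by
  let mk := QuotientGroup.mk' ⁅N, (⊤ : Subgroup K)⁆
  refine commutator_le_eqLocus_of_mul_inv_mem_center (mk.comp a) (mk.comp b) (fun y => ?_) hx
  apply map_mk'_le_center
  exact ⟨_, h y, by simp [mk]⟩

theorem coe_apply_eq_self_of_mem_commutator {q : K →* H} {ψ : K →* K}
    (h : ∀ y, q (ψ y) = q y) {w : K} (hw : w ∈ commutator K) :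
    (ψ w : K ⧸ ⁅q.ker, (⊤ : Subgroup K)⁆) = w :=
  coe_apply_eq_of_mem_commutator (b := MonoidHom.id K) (fun y => by simp [MonoidHom.mem_ker, h]) hw

theorem commutator_top_le_comap {f : G →* H} {N : Subgroup G} {M : Subgroup H}
    (h : N ≤ M.comap f) : ⁅N, ⊤⁆ ≤ (⁅M, ⊤⁆ : Subgroup H).comap f := by
  rw [← map_le_iff_le_comap, map_commutator]
  exact commutator_mono (map_le_iff_le_comap.mpr h) le_top

theorem map_commutator_le (f : G →* H) : (commutator G).map f ≤ commutator H := by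
  rw [map_commutator_eq]
  exact commutator_mono le_top le_top

theorem map_commutator_of_surjective {f : G →* H} (hf : Function.Surjective f) :
    (commutator G).map f = commutator H := by
  rw [map_commutator_eq, f.range_eq_top.mpr hf, commutator_def]

theorem commutator_top_eq_map_of_surjective {f : G →* H} (hf : Function.Surjective f)
    (N : Subgroup H) : ⁅N, ⊤⁆ = (⁅N.comap f, ⊤⁆ : Subgroup G).map f := by
  rw [map_commutator, map_comap_eq_self_of_surjective hf, map_top_of_surjective f hf]

end Commutators

theorem FreeGroup.exists_lift_of_surjective {ι H K : Type*} [Group H] [Group K] {p : H →* K}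
    (hp : Function.Surjective p) (f : FreeGroup ι →* K) :
    ∃ φ : FreeGroup ι →* H, ∀ x, p (φ x) = f x := by
  refine ⟨FreeGroup.lift (Function.surjInv hp ∘ f ∘ FreeGroup.of), fun x => ?_⟩
  rw [← MonoidHom.comp_apply]
  congr 1
  exact FreeGroup.ext_hom _ _ fun i => by simp [Function.surjInv_eq hp]

namespace Abelianization

variable {G Q : Type*} [Group G] [Group Q] {π : G →* Q}

theorem map_surjective (hπ : Function.Surjective π) : Function.Surjective (map π) := by
  intro y
  induction y using QuotientGroup.induction_on with
  | H q =>
    obtain ⟨g, rfl⟩ := hπ q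
    exact ⟨of g, rfl⟩

theorem ker_map_of_surjective (hπ : Function.Surjective π) : (map π).ker = π.ker.map of := by
  apply le_antisymm
  · intro y hy
    induction y using QuotientGroup.induction_on with
    | H g =>
      have hg : π g ∈ (commutator G).map π := by
        rw [map_commutator_of_surjective hπ, ← ker_of]
        exact hy
      obtain ⟨c, hc, hcg⟩ := hg
      refine ⟨g * c⁻¹, by simp [hcg], ?_⟩
      rw [map_mul, map_inv, (ker_of G).ge hc, inv_one, mul_one]
      rfl
  · rintro _ ⟨n, hn, rfl⟩
    rw [MonoidHom.mem_ker, map_of, hn, map_one]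

end Abelianization

section Restriction

variable {A B C : Type*} [Group A] [Group B] [Group C] {H : Subgroup A} {K : Subgroup B}

def MonoidHom.restrictSubgroups (f : A →* B) (h : H.map f ≤ K) : H →* K :=
  (f.domRestrict H).codRestrict K fun x => h (mem_map_of_mem f x.2)

theorem MonoidHom.ker_restrictSubgroups (f : A →* B) (h : H.map f ≤ K) :
    (f.restrictSubgroups h).ker = f.ker.subgroupOf H := by
  simp [MonoidHom.restrictSubgroups]

theorem MonoidHom.range_restrictSubgroups_eq_ker {f : A →* B} {g : B →* C} (h : H.map f ≤ K)
    (hfg : H.map f = K ⊓ g.ker) : (f.restrictSubgroups h).range = g.ker.subgroupOf K := by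
  rw [← inf_subgroupOf_left, ← hfg]
  ext ⟨y, hy⟩
  simp [MonoidHom.restrictSubgroups, mem_subgroupOf, Subtype.ext_iff]

end Restriction

section FiveTermSequence

variable {F E G Q : Type*} [Group F] [Group E] [Group G] [Group Q]
  {p : F →* G} {q : E →* Q} {π : G →* Q} {φ : F →* E} {θ : E →* F}

-- `nilMult P 1` unfolds to `hopfMultiplier P.π`.
def hopfMultiplier (p : F →* G) : Subgroup (F ⧸ ⁅p.ker, (⊤ : Subgroup F)⁆) :=
  (p.ker ⊓ commutator F).map (QuotientGroup.mk' _)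

def toAbelianization (N : Subgroup G) [N.Normal] :
    G ⧸ ⁅N, (⊤ : Subgroup G)⁆ →* Abelianization G :=
  QuotientGroup.lift _ Abelianization.of <|
    (commutator_mono le_top le_top).trans (Abelianization.ker_of G).ge

def hopfMap (hφ : ∀ x, q (φ x) = π (p x)) :
    F ⧸ ⁅p.ker, (⊤ : Subgroup F)⁆ →* E ⧸ ⁅q.ker, (⊤ : Subgroup E)⁆ :=
  QuotientGroup.map _ _ φ <| commutator_top_le_comap fun x hx => by
    rw [mem_comap, MonoidHom.mem_ker, hφ, MonoidHom.mem_ker.mp hx, map_one]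

def connectingMap (hθ : ∀ y, π (p (θ y)) = q y) :
    E ⧸ ⁅q.ker, (⊤ : Subgroup E)⁆ →* G ⧸ ⁅π.ker, (⊤ : Subgroup G)⁆ :=
  QuotientGroup.map _ _ (p.comp θ) <| commutator_top_le_comap fun y hy => by
    rw [mem_comap, MonoidHom.mem_ker, MonoidHom.comp_apply, hθ, MonoidHom.mem_ker.mp hy]

theorem connectingMap_hopfMap (hφ : ∀ x, q (φ x) = π (p x)) (hθ : ∀ y, π (p (θ y)) = q y)
    {u : F} (hu : u ∈ commutator F) :
    connectingMap hθ (hopfMap hφ u) = p u :=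
  coe_apply_eq_of_mem_commutator (a := p.comp (θ.comp φ)) (b := p)
    (fun x => by simp [MonoidHom.mem_ker, hθ, hφ]) hu

theorem map_hopfMap_hopfMultiplier (hφ : ∀ x, q (φ x) = π (p x))
    (hθ : ∀ y, π (p (θ y)) = q y)
    (hp : Function.Surjective p) :
    (hopfMultiplier p).map (hopfMap hφ) = hopfMultiplier q ⊓ (connectingMap hθ).ker := by
  apply le_antisymm
  · rintro _ ⟨_, ⟨u, ⟨hR : p u = 1, hF⟩, rfl⟩, rfl⟩
    refine ⟨⟨φ u, ⟨?_, map_commutator_le φ ⟨u, hF, rfl⟩⟩, rfl⟩, ?_⟩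
    · show q (φ u) = 1
      rw [hφ, hR, map_one]
    · show connectingMap hθ (hopfMap hφ u) = 1
      rw [connectingMap_hopfMap hφ hθ hF, hR, QuotientGroup.mk_one]
  · rintro _ ⟨⟨w, ⟨hT, hE⟩, rfl⟩, hker⟩
    have hpθw : p (θ w) ∈ ⁅π.ker, (⊤ : Subgroup G)⁆ := (QuotientGroup.eq_one_iff _).mp hker
    rw [commutator_top_eq_map_of_surjective hp] at hpθw
    obtain ⟨v, hv, hpv⟩ := hpθw
    have hφv : (φ v : E ⧸ ⁅q.ker, (⊤ : Subgroup E)⁆) = 1 := by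
      refine (QuotientGroup.eq_one_iff _).mpr (commutator_top_le_comap (fun x hx => ?_) hv)
      rw [mem_comap, MonoidHom.mem_ker, hφ]
      exact hx
    have hF : θ w * v⁻¹ ∈ commutator F :=
      mul_mem (map_commutator_le θ ⟨w, hE, rfl⟩) (inv_mem (commutator_mono le_top le_top hv))
    refine ⟨_, ⟨θ w * v⁻¹, ⟨?_, hF⟩, rfl⟩, ?_⟩
    · show p (θ w * v⁻¹) = 1
      rw [map_mul, map_inv, hpv, mul_inv_cancel]
    · show (φ (θ w * v⁻¹) : E ⧸ ⁅q.ker, (⊤ : Subgroup E)⁆) = w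
      rw [map_mul, map_inv, QuotientGroup.mk_mul, QuotientGroup.mk_inv, hφv, inv_one, mul_one]
      exact coe_apply_eq_self_of_mem_commutator (ψ := φ.comp θ) (fun y => (hφ _).trans (hθ y)) hE

theorem map_connectingMap_hopfMultiplier (hφ : ∀ x, q (φ x) = π (p x))
    (hθ : ∀ y, π (p (θ y)) = q y)
    (hp : Function.Surjective p) :
    (hopfMultiplier q).map (connectingMap hθ) =
      π.ker.map (QuotientGroup.mk' _) ⊓ (toAbelianization π.ker).ker := by
  apply le_antisymm
  · rintro _ ⟨_, ⟨w, ⟨hT, hE⟩, rfl⟩, rfl⟩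
    refine ⟨⟨p (θ w), ?_, rfl⟩, ?_⟩
    · show π (p (θ w)) = 1
      rw [hθ]
      exact hT
    · show Abelianization.of (p (θ w)) = 1
      rw [← MonoidHom.mem_ker, Abelianization.ker_of]
      exact map_commutator_le (p.comp θ) ⟨w, hE, rfl⟩
  · rintro _ ⟨⟨g, hN, rfl⟩, hker⟩
    have hg : g ∈ (commutator F).map p := by
      rw [map_commutator_of_surjective hp, ← Abelianization.ker_of]
      exact hker
    obtain ⟨u, hu, rfl⟩ := hg
    refine ⟨_, ⟨φ u, ⟨?_, map_commutator_le φ ⟨u, hu, rfl⟩⟩, rfl⟩,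
      connectingMap_hopfMap hφ hθ hu⟩
    show q (φ u) = 1
    rw [hφ]
    exact hN

theorem map_toAbelianization (hπ : Function.Surjective π) :
    (π.ker.map (QuotientGroup.mk' _)).map (toAbelianization π.ker) =
      (Abelianization.map π).ker := by
  rw [map_map, Abelianization.ker_map_of_surjective hπ]
  rfl

end FiveTermSequence

/-- Stallings–Stammbach: every extension `1 → N → G → Q → 1` (here `N = ker π` for a
surjection `π : G → Q`) determines a five-term exact sequence
`M(G) → M(Q) → N/[N,G] → G/G' → Q/Q' → 1`. -/
theorem stallings_stammbach (G Q : Type) [Group G] [Group Q] (π : G →* Q)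
    (hπ : Function.Surjective π)
    (PG : FreePresentation G) (PQ : FreePresentation Q) :
    ∃ (f1 : nilMult PG 1 →* nilMult PQ 1)
      (f2 : nilMult PQ 1 →*
        (Subgroup.map (QuotientGroup.mk' ⁅π.ker, (⊤ : Subgroup G)⁆) π.ker))
      (f3 : (Subgroup.map (QuotientGroup.mk' ⁅π.ker, (⊤ : Subgroup G)⁆) π.ker) →*
        Abelianization G)
      (f4 : Abelianization G →* Abelianization Q),
      f1.range = f2.ker ∧ f2.range = f3.ker ∧ f3.range = f4.ker ∧
        Function.Surjective f4 := by
  obtain ⟨φ, hφ⟩ := FreeGroup.exists_lift_of_surjective PQ.surj (π.comp PG.π)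
  obtain ⟨θ, hθ⟩ :=
    FreeGroup.exists_lift_of_surjective (p := π.comp PG.π) (hπ.comp PG.surj) PQ.π
  have exact₁ := map_hopfMap_hopfMultiplier hφ hθ PG.surj
  have exact₂ := map_connectingMap_hopfMultiplier hφ hθ PG.surj
  exact ⟨(hopfMap hφ).restrictSubgroups (exact₁.trans_le inf_le_left),
    (connectingMap hθ).restrictSubgroups (exact₂.trans_le inf_le_left),
    (toAbelianization π.ker).domRestrict _, Abelianization.map π,
    (MonoidHom.range_restrictSubgroups_eq_ker _ exact₁).trans
      (MonoidHom.ker_restrictSubgroups _ _).symm,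
    MonoidHom.range_restrictSubgroups_eq_ker _ exact₂,
    (MonoidHom.domRestrict_range _ _).trans (map_toAbelianization hπ),
    Abelianization.map_surjective hπ⟩
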